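/- Let d ≥ 2 and let x, x' ∈ ℝ^{d-1} with ‖x‖₂ ≤ 1, ‖x'‖₂ ≤ 1 and ‖x‖₂ ≤ ‖x'‖₂. Then (‖x‖₂ / ‖p − σ(x)‖₂) · ‖σ(x) − σ(x')‖₂ ≤ ‖x − x'‖₂, where p = (0,…,0,1) ∈ ℝ^d. -/
import Mathlib


open Finset

/-- The inverse stereographic projection `σ : ℝ^(d-1) → ℝ^d` with pole `(0,…,0,1)`:
`σ(x) = (2x₁/(1+S²), …, 2x_{d-1}/(1+S²), (−1+S²)/(1+S²))` where `S² = ∑ⱼ xⱼ²`. -/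
noncomputable def sigma' {d : ℕ} (x : Fin (d - 1) → ℝ) : Fin d → ℝ := fun k =>
  if h : (k : ℕ) < d - 1 then
    2 * x ⟨k, h⟩ / (1 + ∑ j, x j ^ 2)
  else
    (-1 + ∑ j, x j ^ 2) / (1 + ∑ j, x j ^ 2)

/-- The stereographic projection `τ : ℝ^d → ℝ^(d-1)` from the pole `(0,…,0,1)`:
`τ(x) = (x₁/(1−x_d), …, x_{d-1}/(1−x_d))`. -/
noncomputable def tau' {d : ℕ} (x : Fin d → ℝ) : Fin (d - 1) → ℝ := fun i =>
  x ⟨(i : ℕ), by have := i.isLt; omega⟩ / (1 - x ⟨d - 1, by have := i.isLt; omega⟩)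

/-- The projection pole `p = (0,…,0,1) ∈ ℝ^d`. -/
def pole (d : ℕ) : Fin d → ℝ := fun k => if (k : ℕ) = d - 1 then 1 else 0

/-- The Euclidean norm `‖x‖₂` of a vector `x ∈ ℝ^n`. -/
noncomputable def norm2 {n : ℕ} (x : Fin n → ℝ) : ℝ := Real.sqrt (∑ i, x i ^ 2)
lemma sum_split {d : ℕ} (hd : 1 ≤ d) (f : Fin d → ℝ) :
    ∑ k, f k = (∑ i : Fin (d - 1), f (Fin.castLE (by omega) i)) + f ⟨d - 1, by omega⟩ := by
  obtain ⟨m, rfl⟩ := Nat.exists_eq_succ_of_ne_zero (by omega : d ≠ 0)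
  rw [Fin.sum_univ_castSucc]
  rfl

lemma pole_castLE {d : ℕ} (hd : 1 ≤ d) (i : Fin (d - 1)) :
    pole d (Fin.castLE (by omega) i) = 0 := by
  simp only [pole, Fin.coe_castLE, if_neg (Nat.ne_of_lt i.isLt)]

lemma pole_last {d : ℕ} (hd : 1 ≤ d) : pole d ⟨d - 1, by omega⟩ = 1 := by
  simp [pole]

lemma sigma'_castLE {d : ℕ} (hd : 1 ≤ d) (x : Fin (d - 1) → ℝ) (i : Fin (d - 1)) :
    sigma' x (Fin.castLE (by omega) i) = 2 * x i / (1 + ∑ j, x j ^ 2) := by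
  simp only [sigma', Fin.coe_castLE, dif_pos i.isLt, Fin.eta]

lemma sigma'_last {d : ℕ} (hd : 1 ≤ d) (x : Fin (d - 1) → ℝ) :
    sigma' x ⟨d - 1, by omega⟩ = (-1 + ∑ j, x j ^ 2) / (1 + ∑ j, x j ^ 2) := by
  simp only [sigma', dif_neg (lt_irrefl (d-1))]


set_option maxHeartbeats 1000000 in
/-- For `x, x'` in the closed unit ball of `ℝ^(d-1)` with `‖x‖₂ ≤ ‖x'‖₂`,
`(‖x‖₂ / ‖p − σ(x)‖₂) · ‖σ(x) − σ(x')‖₂ ≤ ‖x − x'‖₂`. -/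
theorem sigma_inscribed_angle_bound {d : ℕ} (hd : 2 ≤ d)
    (x x' : Fin (d - 1) → ℝ)
    (hx : norm2 x ≤ 1) (hx' : norm2 x' ≤ 1) (hle : norm2 x ≤ norm2 x') :
    norm2 x / norm2 (pole d - sigma' x) * norm2 (sigma' x - sigma' x') ≤
      norm2 (x - x') := by
  have hd1 : 1 ≤ d := by omega
  simp only [norm2, Pi.sub_apply] at hx hx' hle ⊢
  set S := ∑ j, x j ^ 2 with hSdef
  set S' := ∑ j, x' j ^ 2 with hS'def
  set P := ∑ j, x j * x' j with hPdef
  set Q := ∑ j, (x j - x' j) ^ 2 with hQdef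
  have hS0 : 0 ≤ S := Finset.sum_nonneg fun i _ => sq_nonneg _
  have hS'0 : 0 ≤ S' := Finset.sum_nonneg fun i _ => sq_nonneg _
  have hQ0 : 0 ≤ Q := Finset.sum_nonneg fun i _ => sq_nonneg _
  have hA : (0:ℝ) < 1 + S := by linarith
  have hB : (0:ℝ) < 1 + S' := by linarith
  have hAne : (1:ℝ) + S ≠ 0 := ne_of_gt hA
  have hBne : (1:ℝ) + S' ≠ 0 := ne_of_gt hB
  have hQeq : Q = S + S' - 2 * P := by
    rw [hQdef, hSdef, hS'def, hPdef, Finset.mul_sum, ← Finset.sum_add_distrib,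
      ← Finset.sum_sub_distrib]
    exact Finset.sum_congr rfl fun i _ => by ring
  -- sum for pole - sigma' x
  have e1 : ∑ k, (pole d k - sigma' x k) ^ 2 = 4 / (1 + S) := by
    rw [sum_split hd1 (fun k => (pole d k - sigma' x k) ^ 2)]
    have h1 : (∑ i : Fin (d-1), (pole d (Fin.castLE (by omega) i)
        - sigma' x (Fin.castLE (by omega) i)) ^ 2) = S * (4 / (1 + S) ^ 2) := by
      rw [hSdef, Finset.sum_mul]
      refine Finset.sum_congr rfl fun i _ => ?_
      rw [pole_castLE hd1, sigma'_castLE hd1]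
      field_simp
      ring
    rw [h1, pole_last hd1, sigma'_last hd1]
    field_simp
    ring
  -- sum for sigma' x - sigma' x'
  have e2 : ∑ k, (sigma' x k - sigma' x' k) ^ 2 = 4 * Q / ((1 + S) * (1 + S')) := by
    rw [sum_split hd1 (fun k => (sigma' x k - sigma' x' k) ^ 2)]
    have h1 : (∑ i : Fin (d-1), (sigma' x (Fin.castLE (by omega) i)
        - sigma' x' (Fin.castLE (by omega) i)) ^ 2)
        = S * (4 / (1 + S) ^ 2) + S' * (4 / (1 + S') ^ 2)
          + P * (-8 / ((1 + S) * (1 + S'))) := by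
      rw [hSdef, hS'def, hPdef, Finset.sum_mul, Finset.sum_mul, Finset.sum_mul,
        ← Finset.sum_add_distrib, ← Finset.sum_add_distrib]
      refine Finset.sum_congr rfl fun i _ => ?_
      rw [sigma'_castLE hd1, sigma'_castLE hd1]
      field_simp
      ring
    rw [h1, sigma'_last hd1, sigma'_last hd1, hQeq]
    field_simp
    ring
  rw [e1, e2]
  have sqrt4 : Real.sqrt 4 = 2 := by
    rw [show (4:ℝ) = 2 ^ 2 by norm_num, Real.sqrt_sq (by norm_num)]
  have h4A : Real.sqrt (4 / (1 + S)) = 2 / Real.sqrt (1 + S) := by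
    rw [Real.sqrt_div (by norm_num), sqrt4]
  have h4AB : Real.sqrt (4 * Q / ((1 + S) * (1 + S')))
      = 2 * Real.sqrt Q / (Real.sqrt (1 + S) * Real.sqrt (1 + S')) := by
    rw [Real.sqrt_div (by positivity), Real.sqrt_mul (by norm_num), sqrt4,
      Real.sqrt_mul hA.le]
  rw [h4A, h4AB]
  have hs : 0 < Real.sqrt (1 + S) := Real.sqrt_pos.2 hA
  have ht : 0 < Real.sqrt (1 + S') := Real.sqrt_pos.2 hB
  have ht1 : 1 ≤ Real.sqrt (1 + S') := by
    nlinarith [Real.sq_sqrt hB.le, Real.sqrt_nonneg (1 + S')]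
  have key : Real.sqrt S / (2 / Real.sqrt (1 + S))
      * (2 * Real.sqrt Q / (Real.sqrt (1 + S) * Real.sqrt (1 + S')))
      = Real.sqrt S * Real.sqrt Q / Real.sqrt (1 + S') := by
    field_simp
  rw [key, div_le_iff₀ ht]
  nlinarith [Real.sqrt_nonneg Q, Real.sqrt_nonneg S]
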